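/- arXiv:1001.5224 — 2 statements merged into one kernel-verified Lean document; each statement's English description precedes it below -/
import Mathlib

section
/- Every flat nonzero fractional ideal of an integrally closed domain D is complete, i.e., equal to its b-closure I^b = ⋂ I·V over all valuation overrings V of D. -/
/-!
Let `0 ≠ x ∈ I^b` and `Q = x⁻¹I`. As `1 ∈ QV` for every valuation overring `V`, no valuation
ring containing `D[Q]` has `Q` in its maximal ideal, so `Q·D[Q] = D[Q]`, and this already holds
for a finitely generated `P ⊆ Q`. Put `J = xP ⊆ I`. If `tJ ⊆ D` then `tx ∈ D`: otherwise a
valuation overring of the integrally closed `D` missing `tx` would have `P` in its maximal ideal,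
contradicting `P·D[P] = D[P]`. Hence `x ∈ J_v`, i.e. `I^b ⊆ I_t`.

If `I` is flat, the equational criterion applied to generators of a finitely generated `J ⊆ I`
yields `t_k ∈ (D : J)` and `z_k ∈ I` with `∑ t_k z_k = 1`, so `J_v ⊆ J_v (D : J) I ⊆ I` and
`I_t = I`.
-/


open scoped nonZeroDivisors

section Defs
variable (D K : Type*) [CommRing D] [IsDomain D] [Field K] [Algebra D K] [IsFractionRing D K]

/-- The endomorphism ring `(N : N) = {x ∈ K | x N ⊆ N}` of a `D`-submodule of `K`,
as a subalgebra of `K`. -/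
def ends (N : Submodule D K) : Subalgebra D K where
  carrier := {x : K | ∀ y ∈ N, x * y ∈ N}
  mul_mem' := fun {a b} ha hb y hy => by
    rw [mul_assoc]; exact ha _ (hb _ hy)
  add_mem' := fun {a b} ha hb y hy => by
    rw [add_mul]; exact N.add_mem (ha _ hy) (hb _ hy)
  algebraMap_mem' := fun r y hy => by
    rw [← Algebra.smul_def]; exact N.smul_mem r hy

/-- `N` viewed as a module over its endomorphism ring `(N : N)`. -/
noncomputable def overEnds (N : Submodule D K) : Submodule (ends D K N) K :=
  Submodule.span (ends D K N) (N : Set K)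

/-- A `D`-submodule `N` of `K` is quasi-stable if it is flat as a module over its
endomorphism ring `(N : N)`. -/
def IsQuasiStable (N : Submodule D K) : Prop :=
  Module.Flat (ends D K N) (overEnds D K N)

/-- The `t`-closure of a fractional ideal: the union of the divisorial closures
`J_v = (D : (D : J))` of the finitely generated fractional subideals `J`. -/
noncomputable def tClosure (I : FractionalIdeal D⁰ K) : Submodule D K :=
  ⨆ J : {J : FractionalIdeal D⁰ K // J ≤ I ∧ (J : Submodule D K).FG},
    ((1 / (1 / (J : FractionalIdeal D⁰ K)) : FractionalIdeal D⁰ K) : Submodule D K)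

end Defs

open Algebra Submodule

theorem Module.Flat.exists_factorization_of_proportional {R M : Type*} [CommRing R]
    [AddCommGroup M] [Module R M] [Module.Flat R M] {ι : Type*} [Fintype ι] {e : ι → R}
    {c : ι → M} (h : ∀ i j, e j • c i = e i • c j) :
    ∃ (k : ℕ) (a : ι → Fin k → R) (y : Fin k → M),
      (∀ i, c i = ∑ l, a i l • y l) ∧ ∀ i j l, e j * a i l = e i * a j l := by
  let f : (ι × ι →₀ R) →ₗ[R] ι →₀ R := Finsupp.linearCombination R fun p ↦
    e p.2 • Finsupp.single p.1 1 - e p.1 • Finsupp.single p.2 1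
  let x : (ι →₀ R) →ₗ[R] M := Finsupp.linearCombination R c
  have hxf : x ∘ₗ f = 0 := by
    ext p
    simp [f, x, h]
  obtain ⟨k, a, y, hx, haf⟩ := Module.Flat.exists_factorization_of_comp_eq_zero_of_free hxf
  refine ⟨k, fun i l ↦ a (Finsupp.single i 1) l, fun l ↦ y (Finsupp.single l 1), fun i ↦ ?_,
    fun i j l ↦ ?_⟩
  · have : c i = y (a (Finsupp.single i 1)) := by simp [x, ← LinearMap.comp_apply, ← hx]
    conv_lhs => rw [this, ← Finsupp.univ_sum_single (a (Finsupp.single i 1)), map_sum]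
    exact Finset.sum_congr rfl fun l _ ↦ by rw [← map_smul, Finsupp.smul_single_one]
  · have := congr($haf (Finsupp.single (i, j) 1) l)
    simpa only [f, LinearMap.comp_apply, Finsupp.linearCombination_single, one_smul, map_sub,
      map_smul, Finsupp.sub_apply, Finsupp.smul_apply, smul_eq_mul, sub_eq_zero,
      LinearMap.zero_apply, Finsupp.coe_zero, Pi.zero_apply] using this

namespace FractionalIdeal

variable {D K : Type*} [CommRing D] [IsDomain D] [Field K] [Algebra D K] [IsFractionRing D K]

theorem one_div_ne_zero {J : FractionalIdeal D⁰ K} (hJ : J ≠ 0) : 1 / J ≠ 0 := by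
  obtain ⟨s, hs, hsJ⟩ := J.isFractional
  have : algebraMap D K s ∈ 1 / J := (mem_div_iff_of_ne_zero hJ).mpr fun y hy ↦ by
    obtain ⟨d, hd⟩ := hsJ y hy
    rw [← Algebra.smul_def, ← hd]
    exact coe_mem_one _ d
  intro h
  rw [h, mem_zero_iff] at this
  exact IsFractionRing.to_map_ne_zero_of_mem_nonZeroDivisors hs this

theorem mem_one_div_of_span_eq {J : FractionalIdeal D⁰ K} (hJ : J ≠ 0) {S : Set K}
    (hS : span D S = J) {t : K} (ht : ∀ c ∈ S, t * c ∈ (1 : Submodule D K)) :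
    t ∈ 1 / J := by
  refine (mem_div_iff_of_ne_zero hJ).mpr fun y hy ↦ ?_
  have : (J : Submodule D K) ≤ (1 : Submodule D K).comap (LinearMap.mulLeft D t) := by
    rw [← hS, span_le]
    exact ht
  simpa using this hy

theorem one_le_one_div_mul_of_flat {I J : FractionalIdeal D⁰ K}
    [Module.Flat D (I : Submodule D K)] (hJ : J ≠ 0) (hJfg : (J : Submodule D K).FG)
    (hJI : J ≤ I) : 1 ≤ 1 / J * I := by
  obtain ⟨S, hS⟩ := hJfg
  obtain ⟨s, hs, hsI⟩ := I.isFractional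
  have hs0 : algebraMap D K s ≠ 0 := IsFractionRing.to_map_ne_zero_of_mem_nonZeroDivisors hs
  have hSJ (c : S) : (c : K) ∈ J := by rw [← mem_coe, ← hS]; exact Submodule.subset_span c.2
  have hSI (c : S) : (c : K) ∈ I := hJI (hSJ c)
  choose e he using fun c : S ↦ hsI c (hSI c)
  -- `e c = s • c` clears denominators, turning `c' * c = c * c'` into a relation over `D` in `I`
  obtain ⟨k, a, z, hcz, ha⟩ := Module.Flat.exists_factorization_of_proportional
    (c := fun c : S ↦ (⟨c, hSI c⟩ : (I : Submodule D K))) (e := e) fun c c' ↦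
      Subtype.ext (by simp only [SetLike.val_smul, Algebra.smul_def, he]; ring)
  obtain ⟨c₀, hc₀⟩ : ∃ c : S, (c : K) ≠ 0 := by
    by_contra! h
    exact hJ (coeToSubmodule_eq_bot.mp (hS ▸ span_eq_bot.mpr fun c hc ↦ h ⟨c, hc⟩))
  let t l := algebraMap D K (a c₀ l) / c₀
  have htc (c : S) (l) : t l * c = algebraMap D K (a c l) := by
    have := congr(algebraMap D K $(ha c c₀ l))
    simp only [map_mul, he, Algebra.smul_def] at this
    rw [div_mul_eq_mul_div, div_eq_iff hc₀]
    apply mul_left_cancel₀ hs0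
    linear_combination (-1 : K) * this
  have ht l : t l ∈ 1 / J := mem_one_div_of_span_eq hJ hS fun c hc ↦
    Submodule.mem_one.mpr ⟨a ⟨c, hc⟩ l, (htc ⟨c, hc⟩ l).symm⟩
  have hsum : 1 = ∑ l, t l * z l := by
    have := congr(Subtype.val $(hcz c₀))
    simp only [Submodule.coe_sum, SetLike.val_smul, Algebra.smul_def] at this
    simp only [t, div_mul_eq_mul_div, ← Finset.sum_div, ← this, div_self hc₀]
  rw [one_le, ← mem_coe, coe_mul, hsum]
  exact Submodule.sum_mem _ fun l _ ↦ Submodule.mul_mem_mul (ht l) (z l).2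

theorem one_div_one_div_le_of_flat {I J : FractionalIdeal D⁰ K}
    [Module.Flat D (I : Submodule D K)] (hJfg : (J : Submodule D K).FG) (hJI : J ≤ I) :
    1 / (1 / J) ≤ I := by
  rcases eq_or_ne J 0 with rfl | hJ
  · simp -- `1 / 0 = 0`
  calc 1 / (1 / J) = 1 / (1 / J) * 1 := (mul_one _).symm
    _ ≤ 1 / (1 / J) * (1 / J * I) := by gcongr; exact one_le_one_div_mul_of_flat hJ hJfg hJI
    _ = 1 / J * (1 / (1 / J)) * I := by ring
    _ ≤ 1 * I := by gcongr; exact mul_one_div_le_one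
    _ = I := one_mul I

end FractionalIdeal

section tClosure

variable {D K : Type*} [CommRing D] [IsDomain D] [Field K] [Algebra D K] [IsFractionRing D K]

theorem tClosure_le_of_flat (I : FractionalIdeal D⁰ K) [Module.Flat D (I : Submodule D K)] :
    tClosure D K I ≤ I :=
  iSup_le fun J ↦ FractionalIdeal.coe_le_coe.mpr
    (FractionalIdeal.one_div_one_div_le_of_flat J.2.2 J.2.1)

theorem one_div_one_div_le_tClosure {I J : FractionalIdeal D⁰ K} (hJI : J ≤ I)
    (hJfg : (J : Submodule D K).FG) :
    ((1 / (1 / J) : FractionalIdeal D⁰ K) : Submodule D K) ≤ tClosure D K I :=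
  le_iSup_of_le
    (⟨J, hJI, hJfg⟩ : {J : FractionalIdeal D⁰ K // J ≤ I ∧ (J : Submodule D K).FG}) le_rfl

end tClosure

namespace ValuationSubring

variable {D K : Type*} [CommRing D] [Field K] [Algebra D K]

def toSubalgebra (B : ValuationSubring K) (hB : ∀ d, algebraMap D K d ∈ B) : Subalgebra D K :=
  { B.toSubring with algebraMap_mem' := hB }

instance (B : ValuationSubring K) (hB : ∀ d, algebraMap D K d ∈ B) :
    ValuationRing (B.toSubalgebra hB) :=
  inferInstanceAs (ValuationRing B)

theorem one_notMem_mul_of_subset_nonunits (B : ValuationSubring K) {P W : Submodule D K}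
    (hP : (P : Set K) ⊆ B.nonunits) (hW : (W : Set K) ⊆ B) : (1 : K) ∉ P * W := by
  suffices ∀ z ∈ P * W, B.valuation z < 1 from fun h ↦ by simpa using this 1 h
  intro z hz
  refine Submodule.mul_induction_on hz (fun p hp w hw ↦ ?_) fun _ _ ↦ B.valuation.map_add_lt
  rw [map_mul]
  exact mul_lt_one_of_lt_of_le (B.mem_nonunits_iff.mp (hP hp))
    ((B.valuation_le_one_iff w).mpr (hW hw))

theorem one_mem_mul_of_forall_not_subset_nonunits {A : Subalgebra D K} {Q : Submodule D K}
    (hQA : Q ≤ Subalgebra.toSubmodule A)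
    (h : ∀ B : ValuationSubring K, A.toSubring ≤ B.toSubring →
      ¬ (Q : Set K) ⊆ B.nonunits) :
    (1 : K) ∈ Q * Subalgebra.toSubmodule A := by
  by_contra h1
  let 𝔞 : Ideal A.toSubring :=
    { carrier := {a | (a : K) ∈ Q * Subalgebra.toSubmodule A}
      add_mem' := Submodule.add_mem (Q * Subalgebra.toSubmodule A)
      zero_mem' := Submodule.zero_mem (Q * Subalgebra.toSubmodule A)
      smul_mem' := fun r a (ha : (a : K) ∈ _) ↦ by
        have := mul_mem_mul (show (r : K) ∈ Subalgebra.toSubmodule A from r.2) ha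
        rwa [mul_left_comm, Subalgebra.mul_toSubmodule, sup_idem] at this }
  obtain ⟨B, hAB, h𝔞B⟩ :=
    Ideal.image_subset_nonunits_valuationSubring 𝔞 ((Ideal.ne_top_iff_one _).mpr h1)
  refine h B hAB fun q hq ↦
    h𝔞B ⟨⟨q, hQA hq⟩, show q ∈ Q * Subalgebra.toSubmodule A from ?_, rfl⟩
  simpa using mul_mem_mul hq (show (1 : K) ∈ Subalgebra.toSubmodule A from A.one_mem)

end ValuationSubring

section Compactness

variable {R A : Type*} [CommSemiring R] [CommSemiring A] [Algebra R A]

theorem Submodule.exists_fg_le_mem_adjoin {Q : Submodule R A} {a : A}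
    (ha : a ∈ Algebra.adjoin R (Q : Set A)) :
    ∃ P ≤ Q, P.FG ∧ a ∈ Algebra.adjoin R (P : Set A) := by
  induction ha using Algebra.adjoin_induction with
  | mem x hx =>
    exact ⟨span R {x}, (span_singleton_le_iff_mem _ _).mpr hx, fg_span_singleton x,
      Algebra.subset_adjoin (mem_span_singleton_self x)⟩
  | algebraMap r => exact ⟨⊥, bot_le, fg_bot, Subalgebra.algebraMap_mem _ r⟩
  | add x y _ _ hx hy =>
    obtain ⟨Px, hPx, hPxfg, hx⟩ := hx
    obtain ⟨Py, hPy, hPyfg, hy⟩ := hy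
    exact ⟨Px ⊔ Py, sup_le hPx hPy, hPxfg.sup hPyfg,
      add_mem (Algebra.adjoin_mono (SetLike.coe_mono le_sup_left) hx)
        (Algebra.adjoin_mono (SetLike.coe_mono le_sup_right) hy)⟩
  | mul x y _ _ hx hy =>
    obtain ⟨Px, hPx, hPxfg, hx⟩ := hx
    obtain ⟨Py, hPy, hPyfg, hy⟩ := hy
    exact ⟨Px ⊔ Py, sup_le hPx hPy, hPxfg.sup hPyfg,
      mul_mem (Algebra.adjoin_mono (SetLike.coe_mono le_sup_left) hx)
        (Algebra.adjoin_mono (SetLike.coe_mono le_sup_right) hy)⟩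

theorem Submodule.exists_fg_le_mem_mul_adjoin {Q : Submodule R A} {z : A}
    (hz : z ∈ Q * Subalgebra.toSubmodule (Algebra.adjoin R (Q : Set A))) :
    ∃ P ≤ Q, P.FG ∧ z ∈ P * Subalgebra.toSubmodule (Algebra.adjoin R (P : Set A)) := by
  have mono {P P' : Submodule R A} (h : P ≤ P') :
      P * Subalgebra.toSubmodule (Algebra.adjoin R (P : Set A)) ≤
        P' * Subalgebra.toSubmodule (Algebra.adjoin R (P' : Set A)) :=
    mul_le_mul' h (Algebra.adjoin_mono (SetLike.coe_mono h))
  refine Submodule.mul_induction_on hz (fun q hq a ha ↦ ?_) fun z z' hz hz' ↦ ?_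
  · obtain ⟨P, hPQ, hPfg, haP⟩ := exists_fg_le_mem_adjoin ha
    exact ⟨P ⊔ span R {q}, sup_le hPQ ((span_singleton_le_iff_mem _ _).mpr hq),
      hPfg.sup (fg_span_singleton q),
      mul_mem_mul (mem_sup_right (mem_span_singleton_self q))
        (Algebra.adjoin_mono (SetLike.coe_mono le_sup_left) haP)⟩
  · obtain ⟨P, hPQ, hPfg, hzP⟩ := hz
    obtain ⟨P', hPQ', hPfg', hzP'⟩ := hz'
    exact ⟨P ⊔ P', sup_le hPQ hPQ', hPfg.sup hPfg',
      add_mem (mono le_sup_left hzP) (mono le_sup_right hzP')⟩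

end Compactness

section IntegrallyClosed

variable {D K : Type*} [CommRing D] [Field K] [Algebra D K] [IsFractionRing D K]
  [IsIntegrallyClosed D]

theorem exists_valuationSubring_notMem_of_notMem_one {y : K} (hy : y ∉ (1 : Submodule D K)) :
    ∃ B : ValuationSubring K, (∀ d, algebraMap D K d ∈ B) ∧ y ∉ B := by
  have : y ∉ (integralClosure D K).toSubring := fun h ↦
    hy (Submodule.mem_one.mpr (IsIntegrallyClosed.isIntegral_iff.mp h))
  obtain ⟨B, hle, hyB⟩ := Subring.exists_le_valuationSubring_of_isIntegrallyClosedIn this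
  exact ⟨B, fun d ↦ hle ((integralClosure D K).algebraMap_mem d), hyB⟩

theorem mem_one_of_one_mem_mul_adjoin {P : Submodule D K}
    (hP : (1 : K) ∈ P * Subalgebra.toSubmodule (Algebra.adjoin D (P : Set K))) {y : K}
    (hy : ∀ p ∈ P, y * p ∈ (1 : Submodule D K)) : y ∈ (1 : Submodule D K) := by
  by_contra hy1
  obtain ⟨B, hDB, hyB⟩ := exists_valuationSubring_notMem_of_notMem_one hy1
  have hy0 : y ≠ 0 := by rintro rfl; exact hyB B.zero_mem
  have hPB : (P : Set K) ⊆ B.nonunits := fun p hp ↦ by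
    obtain ⟨d, hd⟩ := Submodule.mem_one.mp (hy p hp)
    rw [SetLike.mem_coe, show p = y⁻¹ * (y * p) by field_simp, B.mem_nonunits_iff, map_mul,
      ← hd]
    exact mul_lt_one_of_lt_of_le (B.mem_nonunits_iff.mp (B.inv_mem_nonunits_iff.mpr (.inr hyB)))
      ((B.valuation_le_one_iff _).mpr (hDB d))
  exact B.one_notMem_mul_of_subset_nonunits hPB
    (Algebra.adjoin_le (S := B.toSubalgebra hDB) (hPB.trans B.nonunits_subset)) hP

end IntegrallyClosed

section bClosure

variable {D K : Type*} [CommRing D] [Field K] [Algebra D K]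

def bClosure (N : Submodule D K) : Submodule D K :=
  ⨅ V ∈ {V : Subalgebra D K | ValuationRing V}, N * Subalgebra.toSubmodule V

theorem le_bClosure (N : Submodule D K) : N ≤ bClosure N :=
  le_iInf₂ fun V _ ↦ le_mul_of_one_le_right' (Submodule.one_le.mpr V.one_mem)

theorem bClosure_le_mul (N : Submodule D K) (V : Subalgebra D K) [ValuationRing V] :
    bClosure N ≤ N * Subalgebra.toSubmodule V :=
  iInf₂_le V ‹_›

theorem one_mem_mul_adjoin_of_mem_bClosure {N : Submodule D K} {x : K} (hx0 : x ≠ 0)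
    (hx : x ∈ bClosure N) :
    (1 : K) ∈ span D {x⁻¹} * N *
      Subalgebra.toSubmodule (Algebra.adjoin D (span D {x⁻¹} * N : Set K)) := by
  refine ValuationSubring.one_mem_mul_of_forall_not_subset_nonunits Algebra.subset_adjoin
    fun B hB hNB ↦ ?_
  have hDB d : algebraMap D K d ∈ B := hB (Subalgebra.algebraMap_mem _ d)
  refine B.one_notMem_mul_of_subset_nonunits hNB
    (W := Subalgebra.toSubmodule (B.toSubalgebra hDB)) subset_rfl ?_
  have := mul_mem_mul (mem_span_singleton_self x⁻¹) (bClosure_le_mul N (B.toSubalgebra hDB) hx)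
  rwa [inv_mul_cancel₀ hx0, ← mul_assoc] at this

theorem bClosure_le_tClosure [IsDomain D] [IsFractionRing D K] [IsIntegrallyClosed D]
    (I : FractionalIdeal D⁰ K) : bClosure (I : Submodule D K) ≤ tClosure D K I := by
  intro x hx
  rcases eq_or_ne x 0 with rfl | hx0
  · exact zero_mem _
  obtain ⟨P, hPI, hPfg, hP⟩ :=
    exists_fg_le_mem_mul_adjoin (one_mem_mul_adjoin_of_mem_bClosure hx0 hx)
  have hJfg : (span D {x} * P).FG := (fg_span_singleton x).mul hPfg
  let J : FractionalIdeal D⁰ K := ⟨span D {x} * P, FractionalIdeal.isFractional_of_fg hJfg⟩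
  have hJI : J ≤ I := by
    change span D {x} * P ≤ (I : Submodule D K)
    calc span D {x} * P ≤ span D {x} * (span D {x⁻¹} * I) := mul_le_mul' le_rfl hPI
      _ = I := by
        rw [← mul_assoc, span_mul_span, Set.singleton_mul_singleton, mul_inv_cancel₀ hx0,
          ← one_eq_span, one_mul]
  have hJ0 : J ≠ 0 := by
    intro h
    replace h : span D {x} * P = ⊥ := FractionalIdeal.coeToSubmodule_eq_bot.mpr h
    rcases mul_eq_bot.mp h with h | rfl
    · exact hx0 (span_singleton_eq_bot.mp h)
    · simp at hP
  refine one_div_one_div_le_tClosure hJI hJfg <|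
    (FractionalIdeal.mem_div_iff_of_ne_zero (FractionalIdeal.one_div_ne_zero hJ0)).mpr
      fun t ht ↦ ?_
  rw [FractionalIdeal.mem_div_iff_of_ne_zero hJ0] at ht
  rw [← FractionalIdeal.mem_coe, FractionalIdeal.coe_one, mul_comm]
  refine mem_one_of_one_mem_mul_adjoin hP fun p hp ↦ ?_
  rw [mul_assoc, ← FractionalIdeal.coe_one, FractionalIdeal.mem_coe]
  exact ht _ (mul_mem_mul (mem_span_singleton_self x) hp)

end bClosure

theorem flat_ideal_complete_of_integrallyClosed_general
    (D K : Type*) [CommRing D] [IsDomain D] [Field K] [Algebra D K] [IsFractionRing D K]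
    [IsIntegrallyClosed D]
    (I : FractionalIdeal D⁰ K)
    (hflat : Module.Flat D (I : Submodule D K)) :
    (⨅ V ∈ {V : Subalgebra D K | ValuationRing V},
        (I : Submodule D K) * Subalgebra.toSubmodule V) = (I : Submodule D K) :=
  le_antisymm ((bClosure_le_tClosure I).trans (tClosure_le_of_flat I)) (le_bClosure _)

/-- Every flat nonzero fractional ideal of an integrally closed domain is complete:
it equals the intersection `⋂ I·V` over all valuation overrings `V` of `D`. -/
theorem flat_ideal_complete_of_integrallyClosed
    (D K : Type*) [CommRing D] [IsDomain D] [Field K] [Algebra D K] [IsFractionRing D K]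
    [IsIntegrallyClosed D]
    (I : FractionalIdeal D⁰ K) (hI : I ≠ 0)
    (hflat : Module.Flat D (I : Submodule D K)) :
    (⨅ V ∈ {V : Subalgebra D K | ValuationRing V},
        (I : Submodule D K) * Subalgebra.toSubmodule V) = (I : Submodule D K) :=
  flat_ideal_complete_of_integrallyClosed_general D K I hflat
end

section
/- Let D be an integral domain and I a flat nonzero fractional ideal of D. For every nonzero t-finite fractional ideal J of D, (I:J) = I·J⁻¹. -/
open scoped nonZeroDivisors

/-!
Let `H ⊆ J` be finitely generated with `H_t = J_t`. An element of `H⁻¹` lies in `F⁻¹` for every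
finitely generated `F ⊆ H`, so it multiplies each `F_v`, hence `H_t = J_t ⊇ J`, into `D`. Thus
`H⁻¹ ⊆ J⁻¹` and `(I : J) ⊆ (I : H) ⊆ I H⁻¹ ⊆ I J⁻¹`; the inclusion `I J⁻¹ ⊆ (I : J)` always holds.

Flatness enters only in `(I : H) ⊆ I H⁻¹` for `H = (h_1, …, h_n)`. If `x H ⊆ I`, the elements
`x h_i ∈ I` satisfy the relations `c_j (x h_i) = c_i (x h_j)` over `D`, where `c_i = d h_i` for a
common denominator `d`. By the equational criterion they factor as `x h_i = ∑ α_il z_l` with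
`z_l ∈ I` and `c_j α_il = c_i α_jl`. So `q_l = α_il / h_i` does not depend on `i`, lies in `H⁻¹`,
and `x = ∑ q_l z_l`.
-/

open Finsupp in
theorem Module.Flat.exists_factorization_of_smul_eq_smul {R M : Type*} [CommRing R]
    [AddCommGroup M] [Module R M] [Module.Flat R M] {ι : Type*} [Fintype ι]
    (c : ι → R) (m : ι → M) (h : ∀ i j, c j • m i = c i • m j) :
    ∃ (k : ℕ) (α : ι → Fin k → R) (z : Fin k → M),
      (∀ i, m i = ∑ l, α i l • z l) ∧ ∀ i j l, c j * α i l = c i * α j l := by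
  let rel : ι × ι → ι →₀ R := fun p => c p.2 • single p.1 1 - c p.1 • single p.2 1
  have hcomp : linearCombination R m ∘ₗ linearCombination R rel = 0 := by
    ext p
    simp [rel, linearCombination_single, h p.1 p.2]
  obtain ⟨k, a, y, hya, harel⟩ := Module.Flat.exists_factorization_of_comp_eq_zero_of_free hcomp
  refine ⟨k, fun i => a (single i 1), fun l => y (single l 1), fun i => ?_, fun i j l => ?_⟩
  · calc m i = y (a (single i 1)) := by simpa using LinearMap.congr_fun hya (single i 1)
      _ = _ := by
        conv_lhs => rw [← univ_sum_single (a (single i 1))]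
        simp only [map_sum, ← smul_single_one _ (a _ _), map_smul]
  · have := DFunLike.congr_fun (LinearMap.congr_fun harel (single (i, j) 1)) l
    simp only [rel, LinearMap.comp_apply, linearCombination_single, one_smul, map_sub, map_smul,
      LinearMap.zero_apply, Finsupp.sub_apply, Finsupp.smul_apply, Finsupp.coe_zero,
      Pi.zero_apply, sub_eq_zero, smul_eq_mul] at this
    exact this

namespace FractionalIdeal

variable {D K : Type*} [CommRing D] [IsDomain D] [Field K] [Algebra D K] [IsFractionRing D K]

theorem mem_div_of_forall_mul_mem_of_eq_span {I H : FractionalIdeal D⁰ K} {s : Set K}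
    (hH : H ≠ 0) (hs : (H : Submodule D K) = Submodule.span D s) {q : K}
    (hq : ∀ y ∈ s, q * y ∈ I) : q ∈ I / H := by
  rw [mem_div_iff_of_ne_zero hH]
  intro y hy
  rw [← mem_coe, hs] at hy
  exact (Submodule.span_le (p := (I : Submodule D K).comap (LinearMap.mulLeft D q))).mpr hq hy

theorem mem_mul_one_div_of_eq_sum_smul {I H : FractionalIdeal D⁰ K} {ι κ : Type*} [Fintype κ]
    {h : ι → K} (hspan : (H : Submodule D K) = Submodule.span D (Set.range h)) {i₀ : ι}
    (hi₀ : h i₀ ≠ 0) {x : K} (α : ι → κ → D) (z : κ → (I : Submodule D K))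
    (hxz : ∀ i, x * h i = ∑ l, α i l • (z l : K))
    (hα : ∀ i j l, h j * algebraMap D K (α i l) = h i * algebraMap D K (α j l)) :
    x ∈ I * (1 / H) := by
  have hH : H ≠ 0 := fun hH => hi₀ <| by
    simpa [hH] using (hspan ▸ Submodule.subset_span ⟨i₀, rfl⟩ : h i₀ ∈ (H : Submodule D K))
  let q : κ → K := fun l => algebraMap D K (α i₀ l) / h i₀
  have hq : ∀ l, q l ∈ 1 / H := fun l =>
    mem_div_of_forall_mul_mem_of_eq_span hH hspan <| by
      rintro _ ⟨j, rfl⟩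
      rw [show q l * h j = algebraMap D K (α j l) by
        simp only [q]; field_simp; rw [mul_comm, hα, mul_comm]]
      exact (mem_one_iff D⁰).mpr ⟨_, rfl⟩
  have hxq : x = ∑ l, (z l : K) * q l := calc
    x = x * h i₀ / h i₀ := (mul_div_cancel_right₀ x hi₀).symm
    _ = ∑ l, (z l : K) * q l := by
      rw [hxz, Finset.sum_div]
      exact Finset.sum_congr rfl fun l _ => by simp only [q, Algebra.smul_def]; ring
  rw [hxq]
  exact Submodule.sum_mem _ fun l _ => mul_mem_mul (z l).2 (hq l)

theorem div_le_mul_one_div_of_flat_of_fg (I H : FractionalIdeal D⁰ K)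
    [Module.Flat D (I : Submodule D K)] (hfg : (H : Submodule D K).FG) :
    I / H ≤ I * (1 / H) := by
  rcases eq_or_ne H 0 with rfl | hH0
  · simp
  obtain ⟨n, h, hspan⟩ := Submodule.fg_iff_exists_fin_generating_family.mp hfg
  have h_mem : ∀ i, h i ∈ H := fun i => mem_coe.mp (hspan ▸ Submodule.subset_span ⟨i, rfl⟩)
  obtain ⟨i₀, hi₀⟩ : ∃ i₀, h i₀ ≠ 0 := by
    by_contra! h0
    refine hH0 (coeToSubmodule_eq_bot.mp ?_)
    rw [← hspan, Submodule.span_eq_bot]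
    rintro _ ⟨i, rfl⟩
    exact h0 i
  obtain ⟨d, hd, hden⟩ := H.isFractional
  choose c hc using fun i => hden (h i) (h_mem i)
  intro x hx
  rw [mem_div_iff_of_ne_zero hH0] at hx
  let m : Fin n → (I : Submodule D K) := fun i => ⟨x * h i, hx _ (h_mem i)⟩
  obtain ⟨k, α, z, hmz, hα⟩ := Module.Flat.exists_factorization_of_smul_eq_smul c m
    (fun i j => by
      ext
      simp only [m, SetLike.val_smul, Algebra.smul_def, hc]
      ring)
  refine mem_mul_one_div_of_eq_sum_smul hspan.symm hi₀ α z
    (fun i => by simpa [m] using congr_arg Subtype.val (hmz i)) fun i j l => ?_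
  have hd0 : algebraMap D K d ≠ 0 := IsFractionRing.to_map_ne_zero_of_mem_nonZeroDivisors hd
  have := congr_arg (algebraMap D K) (hα i j l)
  simp only [map_mul, hc, Algebra.smul_def] at this
  apply mul_left_cancel₀ hd0
  linear_combination this

theorem div_le_div_left (I : FractionalIdeal D⁰ K) {F H : FractionalIdeal D⁰ K} (hF : F ≠ 0)
    (hFH : F ≤ H) : I / H ≤ I / F := by
  rw [le_div_iff_mul_le hF]
  rcases eq_or_ne H 0 with rfl | hH
  · simp
  · exact (mul_le_mul_right hFH _).trans ((le_div_iff_mul_le hH).mp le_rfl)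

theorem mul_one_div_le_div (I J : FractionalIdeal D⁰ K) : I * (1 / J) ≤ I / J := by
  rcases eq_or_ne J 0 with rfl | hJ
  · simp
  rw [le_div_iff_mul_le hJ, mul_assoc, mul_comm (1 / J)]
  exact (mul_le_mul_right mul_one_div_le_one _).trans (mul_one I).le

end FractionalIdeal

section tClosure

open FractionalIdeal

variable {D K : Type*} [CommRing D] [IsDomain D] [Field K] [Algebra D K] [IsFractionRing D K]

theorem le_tClosure (J : FractionalIdeal D⁰ K) : (J : Submodule D K) ≤ tClosure D K J := by
  intro x hx
  have hfg : ((spanSingleton D⁰ x : FractionalIdeal D⁰ K) : Submodule D K).FG := by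
    rw [coe_spanSingleton]; exact Submodule.fg_span_singleton x
  refine Submodule.mem_iSup_of_mem ⟨spanSingleton D⁰ x, spanSingleton_le_iff_mem.mpr hx, hfg⟩ ?_
  simp only [one_div_spanSingleton, inv_inv]
  exact mem_spanSingleton_self D⁰ x

theorem tClosure_zero : tClosure D K (0 : FractionalIdeal D⁰ K) = ⊥ :=
  iSup_eq_bot.mpr fun ⟨F, hF, _⟩ => by simp [le_bot_iff.mp hF]

theorem one_div_le_one_div_of_le_tClosure {H J : FractionalIdeal D⁰ K} (hJ : J ≠ 0)
    (hJH : (J : Submodule D K) ≤ tClosure D K H) : 1 / H ≤ 1 / J := by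
  intro x hx
  rw [mem_div_iff_of_ne_zero hJ]
  suffices tClosure D K H ≤
      ((1 : FractionalIdeal D⁰ K) : Submodule D K).comap (LinearMap.mulLeft D x) from
    fun y hy => this (hJH hy)
  refine iSup_le fun ⟨F, hFH, _⟩ => ?_
  rcases eq_or_ne F 0 with rfl | hF
  · simp
  intro w hw
  exact mul_one_div_le_one (mul_mem_mul (div_le_div_left 1 hF hFH hx) hw)

end tClosure

open FractionalIdeal in
theorem div_eq_mul_inv_of_flat_of_tFinite_general
    (D K : Type*) [CommRing D] [IsDomain D] [Field K] [Algebra D K] [IsFractionRing D K]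
    (I : FractionalIdeal D⁰ K)
    (hflat : Module.Flat D (I : Submodule D K))
    (J : FractionalIdeal D⁰ K) (hJ : J ≠ 0)
    (htf : ∃ H : FractionalIdeal D⁰ K, H ≤ J ∧ (H : Submodule D K).FG ∧
      tClosure D K H = tClosure D K J) :
    I / J = I * (1 / J) := by
  obtain ⟨H, hHJ, hfg, htc⟩ := htf
  have hJH : (J : Submodule D K) ≤ tClosure D K H := htc ▸ le_tClosure J
  have hH : H ≠ 0 := by
    rintro rfl
    rw [tClosure_zero, le_bot_iff, coeToSubmodule_eq_bot] at hJH
    exact hJ hJH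
  refine le_antisymm ?_ (mul_one_div_le_div I J)
  calc I / J ≤ I / H := div_le_div_left I hH hHJ
    _ ≤ I * (1 / H) := div_le_mul_one_div_of_flat_of_fg I H hfg
    _ ≤ I * (1 / J) := mul_le_mul_right (one_div_le_one_div_of_le_tClosure hJ hJH) I

/-- If `I` is a flat nonzero fractional ideal, then `(I : J) = I · J⁻¹` for every nonzero
`t`-finite fractional ideal `J`. -/
theorem div_eq_mul_inv_of_flat_of_tFinite
    (D K : Type*) [CommRing D] [IsDomain D] [Field K] [Algebra D K] [IsFractionRing D K]
    (I : FractionalIdeal D⁰ K) (hI : I ≠ 0)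
    (hflat : Module.Flat D (I : Submodule D K))
    (J : FractionalIdeal D⁰ K) (hJ : J ≠ 0)
    (htf : ∃ H : FractionalIdeal D⁰ K, H ≤ J ∧ (H : Submodule D K).FG ∧
      tClosure D K H = tClosure D K J) :
    I / J = I * (1 / J) :=
  div_eq_mul_inv_of_flat_of_tFinite_general D K I hflat J hJ htf
end
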